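/- arXiv:2510.11261 — 4 statements merged into one kernel-verified Lean document; each statement's English description precedes it below -/
import Mathlib

section
/- Let $u > 0 > d$, let $\gamma_i, \eta_i > 0$ and $f_i > 0$ for $i$ in a probability space of agents, with $1/(\gamma \eta)$ and $(\log f)/(\gamma \eta)$ integrable, and let $L \in \mathbb{R}$. Define $p := (-d)/\left\{u \exp\left(\frac{\mathbb{E}[(\log f)/(\gamma\eta)] - (u-d)L}{\mathbb{E}[1/(\gamma\eta)]}\right) - d\right\}$, $q := 1-p$, and for each agent $\phi_i := \frac{1}{\gamma_i \eta_i (u-d)}\left[\log\left(-\frac{pu}{qd}\right) + \log f_i\right]$. Then $\mathbb{E}[\phi] = L$, i.e., the average optimal position equals the external supply. -/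
open MeasureTheory

/-- Mean-field market clearing in the recursive-utility model: with the
equilibrium up-probability `p`, the average optimal position equals the external
supply `L`. -/
theorem stmt_7 {Ω : Type*} [MeasurableSpace Ω] (μ : Measure Ω) [IsProbabilityMeasure μ]
    (u d L : ℝ) (hu : 0 < u) (hd : d < 0)
    (γ η f : Ω → ℝ) (hγ : ∀ᵐ ω ∂μ, 0 < γ ω) (hη : ∀ᵐ ω ∂μ, 0 < η ω)
    (hf : ∀ᵐ ω ∂μ, 0 < f ω)
    (hint1 : Integrable (fun ω => 1 / (γ ω * η ω)) μ)
    (hint2 : Integrable (fun ω => Real.log (f ω) / (γ ω * η ω)) μ)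
    (p q : ℝ)
    (hpdef : p = (-d) /
      (u * Real.exp (((∫ ω, Real.log (f ω) / (γ ω * η ω) ∂μ) - (u - d) * L)
          / (∫ ω, 1 / (γ ω * η ω) ∂μ)) - d))
    (hq : q = 1 - p)
    (φ : Ω → ℝ)
    (hφ : ∀ ω, φ ω = (1 / (γ ω * η ω * (u - d))) *
        (Real.log (-(p * u) / (q * d)) + Real.log (f ω))) :
    ∫ ω, φ ω ∂μ = L := by
  set A := ∫ ω, 1 / (γ ω * η ω) ∂μ with hA
  set B := ∫ ω, Real.log (f ω) / (γ ω * η ω) ∂μ with hB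
  -- A > 0
  have hApos : 0 < A := by
    have hpos : 0 < ∫ ω, 1 / (γ ω * η ω) ∂μ := by
      apply (integral_pos_iff_support_of_nonneg_ae _ hint1).2
      · have : ∀ᵐ ω ∂μ, ω ∈ Function.support fun ω => 1 / (γ ω * η ω) := by
          filter_upwards [hγ, hη] with ω h1 h2
          exact Function.mem_support.2 (ne_of_gt (by positivity))
        have := ae_iff.1 this
        rw [Function.support]
        have h1 : μ {ω | ¬ (1 / (γ ω * η ω) ≠ 0)} = 0 := this
        have : μ ({ω | 1 / (γ ω * η ω) ≠ 0} : Set Ω)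
            = μ (Set.univ : Set Ω) := by
          apply le_antisymm (measure_mono (Set.subset_univ _))
          calc μ Set.univ ≤ μ ({ω | 1 / (γ ω * η ω) ≠ 0} ∪ {ω | ¬ (1 / (γ ω * η ω) ≠ 0)}) := by
                apply measure_mono; intro x _; by_cases h : 1 / (γ x * η x) ≠ 0
                · exact Or.inl h
                · exact Or.inr h
            _ ≤ _ + _ := measure_union_le _ _
            _ = μ {ω | 1 / (γ ω * η ω) ≠ 0} := by rw [h1, add_zero]
        rw [this]
        simp
      · filter_upwards [hγ, hη] with ω h1 h2
        positivity
    exact hpos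
  have hAne : A ≠ 0 := ne_of_gt hApos
  have hud : (0:ℝ) < u - d := by linarith
  have hudne : u - d ≠ 0 := ne_of_gt hud
  set t : ℝ := (B - (u - d) * L) / A with ht
  set e : ℝ := Real.exp t with he
  have hc : (0:ℝ) < e := Real.exp_pos t
  have hc0 : e ≠ 0 := ne_of_gt hc
  have hd0 : d ≠ 0 := ne_of_lt hd
  have hu0 : u ≠ 0 := ne_of_gt hu
  have hD : (0:ℝ) < u * e - d := by nlinarith
  have h1 : u * e - d ≠ 0 := ne_of_gt hD
  -- key: the log term
  have hqval : q = u * e / (u * e - d) := by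
    rw [hq, hpdef]; field_simp; ring
  have hkey : -(p * u) / (q * d) = Real.exp (-t) := by
    rw [hqval, hpdef, Real.exp_neg, ← he]
    field_simp
  have hlog : Real.log (-(p * u) / (q * d)) = -t := by
    rw [hkey, Real.log_exp]
  set K := Real.log (-(p * u) / (q * d)) with hK
  have hφ' : ∀ ω, φ ω = (1 / (u - d)) * (K * (1 / (γ ω * η ω)) + Real.log (f ω) / (γ ω * η ω)) := by
    intro ω
    rw [hφ ω]
    simp only [one_div, div_eq_mul_inv, mul_inv]
    ring
  have hint : ∫ ω, φ ω ∂μ = (1 / (u - d)) * (K * A + B) := by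
    calc ∫ ω, φ ω ∂μ
        = ∫ ω, (1 / (u - d)) * (K * (1 / (γ ω * η ω)) + Real.log (f ω) / (γ ω * η ω)) ∂μ := by
          exact integral_congr_ae (Filter.Eventually.of_forall hφ')
      _ = (1 / (u - d)) * ∫ ω, (K * (1 / (γ ω * η ω)) + Real.log (f ω) / (γ ω * η ω)) ∂μ := by
          rw [integral_const_mul]
      _ = (1 / (u - d)) * (K * A + B) := by
          rw [integral_add (hint1.const_mul K) hint2, integral_const_mul]
  rw [hint, hlog, ht]
  field_simp
  ring
end

section
/- Under the equilibrium transition probabilities, each agent's optimal position decomposes as $\phi_i = \frac{1}{u-d}\left[\frac{\log f_i}{\gamma_i} - \frac{1/\gamma_i}{\mathbb{E}[1/\gamma]}\mathbb{E}\left(\frac{\log f}{\gamma}\right)\right] + \frac{1/\gamma_i}{\mathbb{E}[1/\gamma]} L$. That is: with $u > 0 > d$, $\gamma_i > 0$, $f_i > 0$, $L \in \mathbb{R}$, $p := (-d)/(u\exp(\frac{1}{\mathbb{E}[1/\gamma]}[\mathbb{E}(\frac{\log f}{\gamma}) - (u-d)L]) - d)$ and $q := 1-p$, the identity $\frac{1}{\gamma_i(u-d)}[\log(-\frac{pu}{qd})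 + \log f_i] = \frac{1}{u-d}[\frac{\log f_i}{\gamma_i} - \frac{1/\gamma_i}{\mathbb{E}[1/\gamma]}\mathbb{E}(\frac{\log f}{\gamma})] + \frac{1/\gamma_i}{\mathbb{E}[1/\gamma]}L$ holds. -/
open MeasureTheory

/-- Decomposition of an agent's optimal position under the equilibrium
transition probabilities into a hedging part and a supply-absorption part. -/
theorem stmt_8 {Ω : Type*} [MeasurableSpace Ω] (μ : Measure Ω) [IsProbabilityMeasure μ]
    (u d L : ℝ) (hu : 0 < u) (hd : d < 0)
    (γ f : Ω → ℝ)
    (hint1 : Integrable (fun ω => 1 / γ ω) μ)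
    (hint2 : Integrable (fun ω => Real.log (f ω) / γ ω) μ)
    (hEγ : 0 < ∫ ω, 1 / γ ω ∂μ)
    (γi fi : ℝ) (hγi : 0 < γi) (hfi : 0 < fi)
    (p q : ℝ)
    (hpdef : p = (-d) /
      (u * Real.exp ((1 / ∫ ω, 1 / γ ω ∂μ) *
          ((∫ ω, Real.log (f ω) / γ ω ∂μ) - (u - d) * L)) - d))
    (hq : q = 1 - p) :
    (1 / (γi * (u - d))) * (Real.log (-(p * u) / (q * d)) + Real.log fi)
      = (1 / (u - d)) * (Real.log fi / γi
          - ((1 / γi) / ∫ ω, 1 / γ ω ∂μ) * ∫ ω, Real.log (f ω) / γ ω ∂μ)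
        + ((1 / γi) / ∫ ω, 1 / γ ω ∂μ) * L := by
  set E := ∫ ω, 1 / γ ω ∂μ with hE
  set I := ∫ ω, Real.log (f ω) / γ ω ∂μ with hI
  set c := (1 / E) * (I - (u - d) * L) with hc
  have hA : 0 < Real.exp c := Real.exp_pos c
  have hD : 0 < u * Real.exp c - d := by nlinarith
  have hratio : -(p * u) / (q * d) = Real.exp (-c) := by
    rw [hq, hpdef, Real.exp_neg]
    have h1 : d ≠ 0 := hd.ne
    have h2 : u ≠ 0 := hu.ne'
    have h3 : Real.exp c ≠ 0 := hA.ne'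
    have h4 : u * Real.exp c - d ≠ 0 := hD.ne'
    field_simp
    ring
  rw [hratio, Real.log_exp]
  have hud : u - d ≠ 0 := by intro h; linarith
  have hγ : γi ≠ 0 := hγi.ne'
  have hE0 : E ≠ 0 := hEγ.ne'
  rw [hc]
  field_simp
  ring
end

section
/- Let $u > 0 > d$, let the agent population carry weights $w_1, \ldots, w_m \geq 0$ with $\sum_p w_p = 1$, and for each population $p$ let $\mu_p := \mathbb{E}^p[1/(\gamma\eta)] > 0$ and $\nu_p := \mathbb{E}^p[(\log f^p)/(\gamma\eta)]$ be finite. Define $p^* := (-d)\Big/\left\{u \exp\left(\frac{\sum_p w_p \nu_p - (u-d)L}{\sum_p w_p \mu_p}\right) - d\right\}$ and $q^* := 1 - p^*$. Then $p^* \in (0,1)$ and $\sum_{p=1}^m w_p\, \mathbb{E}^p\left[\frac{1}{\gamma\eta(u-d)}\left(\log\left(-\frac{p^* u}{q^* d}\right) + \log f^p\right)\right] = L$. -/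
open MeasureTheory

/-- Multi-population mean-field equilibrium: the explicit `p*` lies in `(0,1)`
and the population-weighted average optimal demand clears the market. -/
theorem stmt_14 (m : ℕ) (Ω : Fin m → Type*) [∀ p, MeasurableSpace (Ω p)]
    (μ : ∀ p, Measure (Ω p)) [∀ p, IsProbabilityMeasure (μ p)]
    (u d L : ℝ) (hu : 0 < u) (hd : d < 0)
    (w : Fin m → ℝ) (hw : ∀ p, 0 ≤ w p) (hwsum : ∑ p, w p = 1)
    (g f : ∀ p, Ω p → ℝ)
    (hg : ∀ p, ∀ᵐ ω ∂(μ p), 0 < g p ω) (hf : ∀ p, ∀ᵐ ω ∂(μ p), 0 < f p ω)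
    (hint1 : ∀ p, Integrable (fun ω => 1 / g p ω) (μ p))
    (hint2 : ∀ p, Integrable (fun ω => Real.log (f p ω) / g p ω) (μ p))
    (hμpos : ∀ p, 0 < ∫ ω, 1 / g p ω ∂(μ p))
    (pstar qstar : ℝ)
    (hpdef : pstar = (-d) /
      (u * Real.exp (((∑ p, w p * ∫ ω, Real.log (f p ω) / g p ω ∂(μ p)) - (u - d) * L)
          / (∑ p, w p * ∫ ω, 1 / g p ω ∂(μ p))) - d))
    (hq : qstar = 1 - pstar) :
    pstar ∈ Set.Ioo (0:ℝ) 1 ∧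
    ∑ p, w p * ∫ ω, (1 / (g p ω * (u - d))) *
        (Real.log (-(pstar * u) / (qstar * d)) + Real.log (f p ω)) ∂(μ p) = L := by
  set S : ℝ := ∑ p, w p * ∫ ω, 1 / g p ω ∂(μ p) with hSdef
  set N : ℝ := ∑ p, w p * ∫ ω, Real.log (f p ω) / g p ω ∂(μ p) with hNdef
  -- S > 0
  have hSnn : ∀ p ∈ Finset.univ, 0 ≤ w p * ∫ ω, 1 / g p ω ∂(μ p) := fun p _ =>
    mul_nonneg (hw p) (hμpos p).le
  obtain ⟨p0, hp0⟩ : ∃ p, 0 < w p := by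
    by_contra h
    push_neg at h
    have : ∀ p, w p = 0 := fun p => le_antisymm (h p) (hw p)
    simp [this] at hwsum
  have hS : 0 < S := lt_of_lt_of_le (mul_pos hp0 (hμpos p0))
    (Finset.single_le_sum hSnn (Finset.mem_univ p0))
  set E : ℝ := (N - (u - d) * L) / S with hEdef
  set A : ℝ := Real.exp E with hAdef
  have hA : 0 < A := Real.exp_pos E
  have hD : 0 < u * A - d := by nlinarith [mul_pos hu hA]
  have hpstar : pstar = (-d) / (u * A - d) := hpdef
  have hp_pos : 0 < pstar := by
    rw [hpstar]; exact div_pos (by linarith) hD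
  have hp_lt : pstar < 1 := by
    rw [hpstar, div_lt_one hD]; nlinarith [mul_pos hu hA]
  have hud : 0 < u - d := by linarith
  -- qstar value
  have hqval : qstar = u * A / (u * A - d) := by
    rw [hq, hpstar]; field_simp; ring
  -- the log argument equals A⁻¹
  have harg : -(pstar * u) / (qstar * d) = A⁻¹ := by
    rw [hpstar, hqval]
    field_simp [hd.ne, hu.ne', hA.ne', hD.ne']
  have hlog : Real.log (-(pstar * u) / (qstar * d)) = -E := by
    rw [harg, Real.log_inv, hAdef, Real.log_exp]
  refine ⟨⟨hp_pos, hp_lt⟩, ?_⟩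
  -- compute each integral
  have hint : ∀ p, (∫ ω, (1 / (g p ω * (u - d))) *
      (Real.log (-(pstar * u) / (qstar * d)) + Real.log (f p ω)) ∂(μ p))
      = (1 / (u - d)) * ((-E) * (∫ ω, 1 / g p ω ∂(μ p))
          + ∫ ω, Real.log (f p ω) / g p ω ∂(μ p)) := by
    intro p
    have : (fun ω => (1 / (g p ω * (u - d))) *
        (Real.log (-(pstar * u) / (qstar * d)) + Real.log (f p ω)))
        = fun ω => (1 / (u - d)) * ((-E) * (1 / g p ω) + Real.log (f p ω) / g p ω) := by
      funext ω
      rw [hlog]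
      field_simp
    rw [this, integral_const_mul, integral_add ((hint1 p).const_mul (-E)) (hint2 p),
      integral_const_mul]
  calc ∑ p, w p * ∫ ω, (1 / (g p ω * (u - d))) *
        (Real.log (-(pstar * u) / (qstar * d)) + Real.log (f p ω)) ∂(μ p)
      = ∑ p, (1 / (u - d)) * ((-E) * (w p * ∫ ω, 1 / g p ω ∂(μ p))
          + w p * ∫ ω, Real.log (f p ω) / g p ω ∂(μ p)) := by
        refine Finset.sum_congr rfl fun p _ => ?_
        rw [hint p]; ring
    _ = (1 / (u - d)) * ((-E) * S + N) := by
        rw [← Finset.mul_sum, Finset.sum_add_distrib, ← Finset.mul_sum]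
    _ = L := by
        have hES : E * S = N - (u - d) * L := by
          rw [hEdef]; field_simp
        have : (-E) * S + N = (u - d) * L := by nlinarith
        rw [this]; field_simp
end

section
/- Let $u > 0 > d$, $\gamma, \eta > 0$. With zero external order flow, the equilibrium up-probability under subjective biases is $p = (-d)\big/\{u\exp(\frac{\mathbb{E}[(\log f + \log\varpi)/(\gamma\eta)]}{\mathbb{E}[1/(\gamma\eta)]}) - d\}$. If all agents share $f \equiv 1$ (no hedging motive) and the population-average log-bias satisfies $\mathbb{E}[(\log\varpi)/(\gamma\eta)] < 0$ (net pessimistic bias), then $p > p^{\mathbb{Q}} := (-d)/(u-d)$, i.e., the equilibrium excess return is strictly positive. -/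
open MeasureTheory

/-- With no hedging motive (`f ≡ 1`) and a net pessimistic population bias
(`E[(log ϖ)/(γη)] < 0`), the equilibrium up-probability strictly exceeds the
risk-neutral one, i.e. the equilibrium excess return is strictly positive. -/
theorem stmt_17 {Ω : Type*} [MeasurableSpace Ω] (μ : Measure Ω) [IsProbabilityMeasure μ]
    (u d : ℝ) (hu : 0 < u) (hd : d < 0)
    (g ϖ f : Ω → ℝ)
    (hg : ∀ᵐ ω ∂μ, 0 < g ω) (hϖ : ∀ᵐ ω ∂μ, 0 < ϖ ω)
    (hf : ∀ ω, f ω = 1)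
    (hint1 : Integrable (fun ω => 1 / g ω) μ)
    (hint2 : Integrable (fun ω => (Real.log (f ω) + Real.log (ϖ ω)) / g ω) μ)
    (hEg : 0 < ∫ ω, 1 / g ω ∂μ)
    (hbias : ∫ ω, Real.log (ϖ ω) / g ω ∂μ < 0)
    (p : ℝ)
    (hpdef : p = (-d) /
      (u * Real.exp ((∫ ω, (Real.log (f ω) + Real.log (ϖ ω)) / g ω ∂μ)
          / (∫ ω, 1 / g ω ∂μ)) - d)) :
    p > (-d) / (u - d) := by
  have heq : (∫ ω, (Real.log (f ω) + Real.log (ϖ ω)) / g ω ∂μ)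
      = ∫ ω, Real.log (ϖ ω) / g ω ∂μ := by
    congr 1; funext ω; rw [hf ω]; simp
  rw [hpdef, heq]
  have hratio : (∫ ω, Real.log (ϖ ω) / g ω ∂μ) / (∫ ω, 1 / g ω ∂μ) < 0 :=
    div_neg_of_neg_of_pos hbias hEg
  have hexp : Real.exp ((∫ ω, Real.log (ϖ ω) / g ω ∂μ) / (∫ ω, 1 / g ω ∂μ)) < 1 := by
    simpa using Real.exp_lt_exp.mpr (by simpa using hratio : _ < (0:ℝ))
  have hexp0 := Real.exp_pos ((∫ ω, Real.log (ϖ ω) / g ω ∂μ) / (∫ ω, 1 / g ω ∂μ))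
  have h1 : u * Real.exp ((∫ ω, Real.log (ϖ ω) / g ω ∂μ) / (∫ ω, 1 / g ω ∂μ)) - d
      < u - d := by nlinarith
  have h2 : 0 < u * Real.exp ((∫ ω, Real.log (ϖ ω) / g ω ∂μ) / (∫ ω, 1 / g ω ∂μ)) - d := by
    nlinarith
  exact div_lt_div_of_pos_left (by linarith) h2 h1
end
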